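/- arXiv:0911.0329 — 4 statements merged into one kernel-verified Lean document; each statement's English description precedes it below -/
import Mathlib

section
/- For every nonzero integer m, the integral over [-π,π] of e^{imθ}/(1 - e^{i sgn(m) θ}) against the measure sin²(θ/2) dθ/π equals -1/2 if m ∈ {1,-1}, and equals 0 otherwise. -/
open Real MeasureTheory Complex

/-!
With `e = exp (i s θ)` and `s = ±1`, one has `4 sin² (θ / 2) = (1 - e) (1 - e⁻¹)`, so the factor
`1 - e` cancels and the integrand becomes `(exp (i m θ) - exp (i (m - s) θ)) / (4π)`. Integrating
the characters over a full period leaves `([m = 0] - [m = s]) / 2`, and for `s = sgn m` with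
`m ≠ 0` only the second indicator can be nonzero, exactly when `m = ±1`.
-/

lemma integral_Icc_exp_I_int_mul (k : ℤ) :
    ∫ θ : ℝ in Set.Icc (-π) π, exp (I * k * θ) = if k = 0 then (2 * π : ℂ) else 0 := by
  rw [integral_Icc_eq_integral_Ioc, ← intervalIntegral.integral_of_le (by linarith [pi_pos])]
  split_ifs with hk
  · simp [hk]
    ring
  · have hk' : I * k ≠ 0 := by simp [hk]
    have hperiod : exp (I * k * π) = exp (I * k * (-π : ℝ)) := by
      rw [← exp_periodic.int_mul k (I * k * (-π : ℝ))]
      push_cast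
      ring_nf
    rw [integral_exp_mul_complex hk', hperiod, sub_self, zero_div]

lemma integrableOn_exp_I_int_mul (k : ℤ) :
    IntegrableOn (fun θ : ℝ => exp (I * k * θ)) (Set.Icc (-π) π) :=
  (by fun_prop : Continuous fun θ : ℝ => exp (I * k * θ)).integrableOn_Icc

lemma sin_sq_half_eq_one_sub_exp_mul_one_sub_exp_neg (x : ℝ) :
    ((Real.sin (x / 2) ^ 2 : ℝ) : ℂ) = (1 - exp (I * x)) * (1 - exp (-(I * x))) / 4 := by
  have hexp : exp (I * x) * exp (-(I * x)) = 1 := by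
    rw [← Complex.exp_add, add_neg_cancel, Complex.exp_zero]
  have hcos : 2 * Complex.cos x = exp (I * x) + exp (-(I * x)) := by
    rw [two_cos, mul_comm, neg_mul, mul_comm]
  have hcos_half := Complex.cos_sq (x / 2 : ℂ)
  rw [mul_div_cancel₀ _ two_ne_zero] at hcos_half
  push_cast
  linear_combination -hexp / 4 - hcos / 4 - hcos_half + Complex.sin_sq_add_cos_sq (x / 2 : ℂ)

-- At `e = 1` both sides vanish (`z / 0 = 0`), so the integrand identity needs no a.e. argument.
lemma div_one_sub_mul_one_sub_inv (z e : ℂ) : z / (1 - e) * ((1 - e) * (1 - e⁻¹)) = z * (1 - e⁻¹) := by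
  rcases eq_or_ne e 1 with rfl | he
  · simp
  · rw [← mul_assoc, div_mul_cancel₀ _ (sub_ne_zero.mpr he.symm)]

lemma exp_div_one_sub_exp_mul_sin_sq {m s : ℤ} (hs : s = 1 ∨ s = -1) (θ : ℝ) :
    exp (I * m * θ) / (1 - exp (I * s * θ)) * ((Real.sin (θ / 2) ^ 2 / π : ℝ) : ℂ)
      = (exp (I * m * θ) - exp (I * (m - s : ℤ) * θ)) / (4 * π) := by
  have hsin : Real.sin (θ / 2) ^ 2 = Real.sin ((s * θ : ℝ) / 2) ^ 2 := by
    rcases hs with rfl | rfl <;> simp [neg_div]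
  have hshift : exp (I * (m - s : ℤ) * θ) = exp (I * m * θ) * (exp (I * s * θ))⁻¹ := by
    rw [← Complex.exp_neg, ← Complex.exp_add]
    push_cast
    ring_nf
  rw [hshift, ofReal_div, hsin, sin_sq_half_eq_one_sub_exp_mul_one_sub_exp_neg, Complex.exp_neg]
  push_cast
  rw [← mul_assoc I, div_div, ← mul_div_assoc, div_one_sub_mul_one_sub_inv, mul_one_sub]

lemma integral_exp_div_one_sub_exp_mul_sin_sq {m s : ℤ} (hs : s = 1 ∨ s = -1) :
    ∫ θ : ℝ in Set.Icc (-π) π,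
      exp (I * m * θ) / (1 - exp (I * s * θ)) * ((Real.sin (θ / 2) ^ 2 / π : ℝ) : ℂ)
    = ((if m = 0 then 1 else 0) - if m = s then 1 else 0) / 2 := by
  simp_rw [exp_div_one_sub_exp_mul_sin_sq hs]
  rw [integral_div, integral_sub (integrableOn_exp_I_int_mul m) (integrableOn_exp_I_int_mul _),
    integral_Icc_exp_I_int_mul, integral_Icc_exp_I_int_mul]
  simp only [sub_eq_zero]
  split_ifs <;> field_simp <;> ring

/-- `∫_{-π}^π e^{imθ}/(1 - e^{i sgn(m) θ}) sin²(θ/2) dθ/π = -1/2` if `m = ±1`, `0` otherwise. -/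
theorem stmt5 (m : ℤ) (hm : m ≠ 0) :
    ∫ θ : ℝ in Set.Icc (-π) π,
      (Complex.exp (Complex.I * m * θ) / (1 - Complex.exp (Complex.I * (m.sign : ℤ) * θ)))
        * ((Real.sin (θ / 2) ^ 2 / π : ℝ) : ℂ)
    = if m = 1 ∨ m = -1 then (-1/2 : ℂ) else 0 := by
  have hsign : m.sign = 1 ∨ m.sign = -1 := by
    rcases hm.lt_or_gt with h | h
    · exact .inr (Int.sign_eq_neg_one_of_neg h)
    · exact .inl (Int.sign_eq_one_of_pos h)
  have hfixed : m = m.sign ↔ m = 1 ∨ m = -1 := by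
    rcases hm.lt_or_gt with h | h
    · rw [Int.sign_eq_neg_one_of_neg h]; omega
    · rw [Int.sign_eq_one_of_pos h]; omega
  rw [integral_exp_div_one_sub_exp_mul_sin_sq hsign, if_neg hm]
  simp only [hfixed]
  split_ifs <;> norm_num
end

section
/- Let K be a totally real number field and A a quaternion algebra over K. The kernel of the natural surjection from the quotient of fractional ideals by principal ideals generated by elements of K_A = {x ∈ K : ι_ν(x) > 0 for all ν ∈ Ram_∞(A)}, onto the class group H(K), has order 2^{r_A}/[O_K^* : n_A(R^*)], where r_A = #Ram_∞(A) and n_A(R^*) = O_K^* ∩ K_A. -/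
/-!
The kernel is the image of the principal ideals `P` in the quotient by `P_A = {(x) : x ∈ K_A}`,
so its order is `[P : P_A] = [Kˣ : K_Aˣ 𝓞_Kˣ]`, as `𝓞_Kˣ` is the kernel of `x ↦ (x)`. The signs of
an element of `Kˣ` at the real embeddings can be prescribed independently: if `θ` generates `K`
and `a < φ θ < b` are rationals close enough to `φ θ`, then `(θ - a)(θ - b)` is negative at `φ`
and positive at every other real embedding. Hence `[Kˣ : K_Aˣ] = 2 ^ #S`, and dividing by
`[K_Aˣ 𝓞_Kˣ : K_Aˣ] = [𝓞_Kˣ : 𝓞_Kˣ ∩ K_A]` gives the formula.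
-/

open NumberField

/-- The subgroup of `Kˣ` of elements positive at every real embedding in `S`
(for `S = Ram_∞(A)` this is `K_A ∩ Kˣ`). -/
def positiveAt (K : Type*) [Field K] (S : Finset (K →+* ℝ)) : Subgroup Kˣ where
  carrier := {x | ∀ φ ∈ S, 0 < φ x}
  mul_mem' := by
    intro a b ha hb φ hφ
    rw [Units.val_mul, map_mul]
    exact mul_pos (ha φ hφ) (hb φ hφ)
  one_mem' := by intro φ _; simp
  inv_mem' := by
    intro a ha φ hφ
    rw [Units.val_inv_eq_inv_val, map_inv₀]
    exact inv_pos.mpr (ha φ hφ)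

/-- The subgroup of units of `𝓞 K` positive at every embedding in `S`
(this is `𝓞_Kˣ ∩ K_A = n_A(R^*)`). -/
def unitsPositiveAt (K : Type*) [Field K] [NumberField K] (S : Finset (K →+* ℝ)) :
    Subgroup (𝓞 K)ˣ where
  carrier := {u | ∀ φ ∈ S, 0 < φ (algebraMap (𝓞 K) K u)}
  mul_mem' := by
    intro a b ha hb φ hφ
    rw [Units.val_mul, map_mul, map_mul]
    exact mul_pos (ha φ hφ) (hb φ hφ)
  one_mem' := by intro φ _; simp
  inv_mem' := by
    intro a ha φ hφ
    have hx := ha φ hφ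
    have h1 : φ (algebraMap (𝓞 K) K ↑a) * φ (algebraMap (𝓞 K) K ↑a⁻¹) = 1 := by
      simp [← map_mul, ← Units.val_mul]
    nlinarith [hx, h1]

open scoped Topology

namespace Subgroup

variable {G G' : Type*} [Group G] [Group G']

theorem index_comap_mul_index_sup_range (H : Subgroup G) [H.Normal] (f : G' →* G) :
    (H.comap f).index * (H ⊔ f.range).index = H.index := by
  rw [index_comap, ← relIndex_sup_left, relIndex_mul_index le_sup_left]

theorem index_comap_of_range_sup_eq_top (H : Subgroup G) [H.Normal] {f : G' →* G}
    (hf : f.range ⊔ H = ⊤) : (H.comap f).index = H.index := by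
  rw [index_comap, ← relIndex_sup_right, hf, relIndex_top_right]

theorem card_map_mk'_eq_relIndex (N M : Subgroup G) [N.Normal] :
    Nat.card (M.map (QuotientGroup.mk' N)) = N.relIndex M := by
  rw [← M.range_subtype, MonoidHom.map_range, ← index_ker, ← MonoidHom.comap_ker,
    QuotientGroup.ker_mk', M.range_subtype]
  rfl

end Subgroup

theorem QuotientGroup.card_ker_map_id {G : Type*} [Group G] (N M : Subgroup G) [N.Normal]
    [M.Normal] (h : N ≤ M.comap (MonoidHom.id G)) :
    Nat.card (map N M (MonoidHom.id G) h).ker = N.relIndex M := by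
  rw [ker_map, Subgroup.comap_id, Subgroup.card_map_mk'_eq_relIndex]

theorem ker_toPrincipalIdeal (R K : Type*) [CommRing R] [IsDomain R] [Field K] [Algebra R K]
    [IsFractionRing R K] :
    (toPrincipalIdeal R K).ker = (Units.map (algebraMap R K : R →* K)).range := by
  ext x
  rw [MonoidHom.mem_ker, toPrincipalIdeal_eq_iff, Units.val_one,
    ← FractionalIdeal.spanSingleton_one, eq_comm, FractionalIdeal.spanSingleton_eq_spanSingleton]
  simp only [Units.smul_def, Algebra.smul_def, mul_one, MonoidHom.mem_range, Units.ext_iff]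
  rfl

namespace NumberField

variable (K : Type*) [Field K] [NumberField K]

theorem exists_neg_at_and_pos_at_ne (φ₀ : K →+* ℝ) :
    ∃ x : K, φ₀ x < 0 ∧ ∀ ψ : K →+* ℝ, ψ ≠ φ₀ → 0 < ψ x := by
  let θ := (Field.powerBasisOfFiniteOfSeparable ℚ K).gen
  have hθ : ∀ φ ψ : K →+* ℝ, φ θ = ψ θ → φ = ψ := fun φ ψ h => RingHom.ext <|
    AlgHom.congr_fun ((Field.powerBasisOfFiniteOfSeparable ℚ K).algHom_ext
      (f := φ.toRatAlgHom) (g := ψ.toRatAlgHom) h)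
  have hF : ((fun ψ : K →+* ℝ => ψ θ) '' {ψ | ψ ≠ φ₀})ᶜ ∈ 𝓝 (φ₀ θ) :=
    ((Set.toFinite _).isClosed.isOpen_compl).mem_nhds fun ⟨ψ, hψ, h⟩ => hψ (hθ ψ φ₀ h)
  obtain ⟨l, u, ⟨hl, hu⟩, hlu⟩ := mem_nhds_iff_exists_Ioo_subset.mp hF
  obtain ⟨a, hla, ha⟩ := exists_rat_btwn hl
  obtain ⟨b, hb, hbu⟩ := exists_rat_btwn hu
  have hval (ψ : K →+* ℝ) : ψ ((θ - a) * (θ - b)) = (ψ θ - a) * (ψ θ - b) := by simp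
  refine ⟨(θ - a) * (θ - b), ?_, fun ψ hψ => ?_⟩
  · rw [hval]
    exact mul_neg_of_pos_of_neg (by linarith) (by linarith)
  · have hout : ψ θ ∉ Set.Ioo l u := fun h => hlu h ⟨ψ, hψ, rfl⟩
    rw [Set.mem_Ioo, not_and_or, not_lt, not_lt] at hout
    rw [hval]
    rcases hout with h | h
    · exact mul_pos_of_neg_of_neg (by linarith) (by linarith)
    · exact mul_pos (by linarith) (by linarith)

theorem exists_units_forall_pos_iff (P : (K →+* ℝ) → Prop) :
    ∃ x : Kˣ, ∀ φ : K →+* ℝ, 0 < φ x ↔ P φ := by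
  classical
  choose g hg_neg hg_pos using exists_neg_at_and_pos_at_ne K
  let N := Finset.univ.filter fun φ => ¬ P φ
  have hx : ∏ φ ∈ N, g φ ≠ 0 := Finset.prod_ne_zero_iff.mpr fun φ _ h => by
    simpa [h] using hg_neg φ
  refine ⟨Units.mk0 _ hx, fun ψ => ?_⟩
  rw [Units.val_mk0, map_prod]
  by_cases hψ : P ψ
  · refine iff_of_true (Finset.prod_pos fun φ hφ => hg_pos φ ψ ?_) hψ
    rintro rfl
    exact (Finset.mem_filter.mp hφ).2 hψ
  · refine iff_of_false (not_lt.mpr ?_) hψ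
    rw [← Finset.mul_prod_erase N _ (by simpa [N] using hψ)]
    refine (mul_neg_of_neg_of_pos (hg_neg ψ) (Finset.prod_pos fun φ hφ => ?_)).le
    exact hg_pos φ ψ (Finset.ne_of_mem_erase hφ).symm

theorem index_positiveAt (S : Finset (K →+* ℝ)) : (positiveAt K S).index = 2 ^ S.card := by
  let Φ : Kˣ →* (S → ℝˣ) := MonoidHom.pi fun φ => Units.map (φ.1 : K →* ℝ)
  let P := Subgroup.pi Set.univ fun _ : S => Units.posSubgroup ℝ
  have hcomap : positiveAt K S = P.comap Φ := by
    ext x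
    simp [P, Φ, positiveAt, Subgroup.mem_pi, Units.mem_posSubgroup]
  have hsup : Φ.range ⊔ P = ⊤ := by
    refine eq_top_iff.mpr fun y _ => Subgroup.mem_sup.mpr ?_
    obtain ⟨x, hx⟩ := exists_units_forall_pos_iff K fun φ => ∀ h : φ ∈ S, 0 < (y ⟨φ, h⟩ : ℝ)
    refine ⟨Φ x, ⟨x, rfl⟩, (Φ x)⁻¹ * y, fun φ _ => ?_, mul_inv_cancel_left _ _⟩
    have hxφ : 0 < φ.1 x ↔ 0 < (y φ : ℝ) := (hx φ).trans ⟨fun h => h φ.2, fun h _ => h⟩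
    have hφx : φ.1 x ≠ 0 := by simp
    change (Φ x φ)⁻¹ * y φ ∈ Units.posSubgroup ℝ
    rw [Units.mem_posSubgroup, Units.val_mul, Units.val_inv_eq_inv_val]
    change 0 < (φ.1 x)⁻¹ * (y φ : ℝ)
    have hy := (y φ).ne_zero
    rw [mul_pos_iff, inv_pos, inv_lt_zero]
    grind
  rw [hcomap, P.index_comap_of_range_sup_eq_top hsup, Subgroup.index_pi]
  simp [Units.index_posSubgroup]

end NumberField

theorem stmt10_general (K : Type*) [Field K] [NumberField K]
    (S : Finset (K →+* ℝ))
    (h : ((toPrincipalIdeal (𝓞 K) K).comp (positiveAt K S).subtype).range ≤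
        Subgroup.comap (MonoidHom.id _) (toPrincipalIdeal (𝓞 K) K).range) :
    Nat.card
      (QuotientGroup.map
        ((toPrincipalIdeal (𝓞 K) K).comp (positiveAt K S).subtype).range
        (toPrincipalIdeal (𝓞 K) K).range
        (MonoidHom.id _) h).ker
    = 2 ^ S.card / (unitsPositiveAt K S).index := by
  let j : (𝓞 K)ˣ →* Kˣ := Units.map (algebraMap (𝓞 K) K : 𝓞 K →* K)
  have hunits : unitsPositiveAt K S = (positiveAt K S).comap j := rfl
  have hindex := (positiveAt K S).index_comap_mul_index_sup_range j
  rw [index_positiveAt, ← hunits] at hindex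
  rw [QuotientGroup.card_ker_map_id, MonoidHom.range_comp, Subgroup.range_subtype,
    MonoidHom.range_eq_map, Subgroup.relIndex_map_map, top_sup_eq, Subgroup.relIndex_top_right,
    ker_toPrincipalIdeal]
  have hunits_ne_zero : (unitsPositiveAt K S).index ≠ 0 :=
    left_ne_zero_of_mul (by rw [hindex]; positivity)
  exact Nat.eq_div_of_mul_eq_left hunits_ne_zero (by rw [mul_comm, hindex])

/-- The kernel of the natural surjection from the quotient of fractional ideals by principal
ideals generated by elements of `K_A` onto the class group `H(K)` has order
`2^{r_A}/[𝓞_Kˣ : n_A(R^*)]`, where `r_A = #Ram_∞(A)` and `n_A(R^*) = 𝓞_Kˣ ∩ K_A`. -/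
theorem stmt10 (K : Type*) [Field K] [NumberField K]
    (htr : ∀ v : InfinitePlace K, v.IsReal)
    (S : Finset (K →+* ℝ))
    (h : ((toPrincipalIdeal (𝓞 K) K).comp (positiveAt K S).subtype).range ≤
        Subgroup.comap (MonoidHom.id _) (toPrincipalIdeal (𝓞 K) K).range) :
    Nat.card
      (QuotientGroup.map
        ((toPrincipalIdeal (𝓞 K) K).comp (positiveAt K S).subtype).range
        (toPrincipalIdeal (𝓞 K) K).range
        (MonoidHom.id _) h).ker
    = 2 ^ S.card / (unitsPositiveAt K S).index :=
  stmt10_general K S h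
end

section
/- If R is an Eichler order in a quaternion algebra A over a number field K, then the group of units of norm in O_K^* equals exactly the elements of O_K^* that are positive at all ramified infinite places: n_A(R^*) = O_K^* ∩ K_A, given that n_A(R) = O_K ∩ K_A. -/
open NumberField Quaternion

namespace QuaternionAlgebra

variable {R : Type*} [CommRing R] {c₁ c₂ c₃ : R}

def reducedNorm : ℍ[R,c₁,c₂,c₃] →* R where
  toFun a := (a * star a).re
  map_one' := by simp
  map_mul' x y := coe_injective <| by
    conv_lhs => rw [← mul_star_eq_coe, star_mul, mul_assoc, ← mul_assoc y, y.mul_star_eq_coe,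
      coe_commutes, ← mul_assoc, x.mul_star_eq_coe, ← coe_mul]

theorem reducedNorm_apply (a : ℍ[R,c₁,c₂,c₃]) : reducedNorm a = (a * star a).re := rfl

theorem coe_reducedNorm (a : ℍ[R,c₁,c₂,c₃]) :
    ((reducedNorm a : R) : ℍ[R,c₁,c₂,c₃]) = a * star a :=
  a.mul_star_eq_coe.symm

theorem coe_reducedNorm_eq_star_mul (a : ℍ[R,c₁,c₂,c₃]) :
    ((reducedNorm a : R) : ℍ[R,c₁,c₂,c₃]) = star a * a := by
  rw [coe_reducedNorm, star_comm_self']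

/-- If `n(a) * n(b) = 1`, then `star a * (b * star b)` is a two-sided inverse of `a`. -/
theorem isUnit_of_reducedNorm_mul_eq_one {O : Subring ℍ[R,c₁,c₂,c₃]}
    (hstar : ∀ a ∈ O, star a ∈ O) {a b : ℍ[R,c₁,c₂,c₃]} (ha : a ∈ O) (hb : b ∈ O)
    (hab : reducedNorm a * reducedNorm b = 1) : IsUnit (⟨a, ha⟩ : O) := by
  have hright : a * (star a * (b * star b)) = 1 := by
    rw [← mul_assoc, ← coe_reducedNorm, ← coe_reducedNorm, ← coe_mul, hab, coe_one]
  have hleft : star a * (b * star b) * a = 1 := by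
    rw [← coe_reducedNorm, ← coe_commutes, mul_assoc, ← coe_reducedNorm_eq_star_mul, ← coe_mul,
      mul_comm, hab, coe_one]
  exact ⟨⟨⟨a, ha⟩, ⟨_, O.mul_mem (hstar a ha) (O.mul_mem hb (hstar b hb))⟩,
    Subtype.ext hright, Subtype.ext hleft⟩, rfl⟩

end QuaternionAlgebra

open QuaternionAlgebra in
/-- `S` stands for `Ram_∞(A)`, and `(a * star a).re` is the reduced norm `n_A(a)`. -/
theorem stmt11_general (K : Type*) [Field K] (c₁ c₂ : K)
    (S : Finset (K →+* ℝ))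
    (R : Subring ℍ[K, c₁, c₂])
    (hstar : ∀ a ∈ R, star a ∈ R)
    (hnorm : {x : K | ∃ a ∈ R, (a * star a).re = x}
      = {x : K | (∃ y : 𝓞 K, algebraMap (𝓞 K) K y = x) ∧ ∀ φ ∈ S, 0 < φ x}) :
    {x : K | ∃ a : Rˣ, (((a : R) : ℍ[K, c₁, c₂]) * star ((a : R) : ℍ[K, c₁, c₂])).re = x}
      = {x : K | (∃ u : (𝓞 K)ˣ, algebraMap (𝓞 K) K u = x) ∧ ∀ φ ∈ S, 0 < φ x} := by
  simp only [← reducedNorm_apply, Set.ext_iff, Set.mem_ofPred_eq] at hnorm ⊢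
  intro x
  constructor
  · rintro ⟨a, rfl⟩
    obtain ⟨⟨y, hy⟩, hpos⟩ := (hnorm _).1 ⟨a, a.1.2, rfl⟩
    obtain ⟨⟨z, hz⟩, -⟩ := (hnorm _).1 ⟨_, (a⁻¹ : Rˣ).1.2, rfl⟩
    have hyz : y * z = 1 := FaithfulSMul.algebraMap_injective (𝓞 K) K <| by
      rw [map_mul, hy, hz, ← map_mul, ← Subring.coe_mul, Units.mul_inv, Subring.coe_one, map_one,
        map_one]
    exact ⟨⟨(IsUnit.of_mul_eq_one z hyz).unit, hy⟩, hpos⟩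
  · rintro ⟨⟨u, rfl⟩, hpos⟩
    obtain ⟨a, ha, hna⟩ := (hnorm _).2 ⟨⟨u, rfl⟩, hpos⟩
    have hpos_inv : ∀ φ ∈ S, 0 < φ (algebraMap (𝓞 K) K ↑u⁻¹) := fun φ hφ => by
      simpa [map_units_inv, map_inv₀] using hpos φ hφ
    obtain ⟨b, hb, hnb⟩ := (hnorm _).2 ⟨⟨_, rfl⟩, hpos_inv⟩
    have hab : reducedNorm a * reducedNorm b = 1 := by
      rw [hna, hnb, ← map_mul, Units.mul_inv, map_one]
    exact ⟨(isUnit_of_reducedNorm_mul_eq_one hstar ha hb hab).unit, hna⟩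

/-- For an Eichler order `R` in a quaternion algebra `A = ℍ[K,c₁,c₂]` over a number field `K`
(with `R` closed under conjugation), given that the reduced norms of elements of `R` are exactly
`𝓞_K ∩ K_A`, the reduced norms of the units of `R` are exactly `𝓞_Kˣ ∩ K_A`.  Here
`K_A = {x : K | ι_φ(x) > 0 for all φ ∈ Ram_∞(A)}`, `S = Ram_∞(A)`, and the reduced norm is
`n_A(a) = (a * star a).re`. -/
theorem stmt11 (K : Type*) [Field K] [NumberField K] (c₁ c₂ : K)
    (S : Finset (K →+* ℝ))
    (R : Subring ℍ[K, c₁, c₂])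
    (hstar : ∀ a ∈ R, star a ∈ R)
    (hnorm : {x : K | ∃ a ∈ R, (a * star a).re = x}
      = {x : K | (∃ y : 𝓞 K, algebraMap (𝓞 K) K y = x) ∧ ∀ φ ∈ S, 0 < φ x}) :
    {x : K | ∃ a : Rˣ, (((a : R) : ℍ[K, c₁, c₂]) * star ((a : R) : ℍ[K, c₁, c₂])).re = x}
      = {x : K | (∃ u : (𝓞 K)ˣ, algebraMap (𝓞 K) K u = x) ∧ ∀ φ ∈ S, 0 < φ x} :=
  stmt11_general K c₁ c₂ S R hstar hnorm
end

section
/- For a smooth even test function with compactly supported Fourier transform ĥ, one has (-1/2π)∫_{-∞}^∞ ĥ'(u)/(2 sinh(u/2)) · e^{-mu}(1 - e^{σu}) du = ((2|m|-1)/4π) · h(i(|m| - 1/2)) for every nonzero integer m with σ = sgn(m), where h(r) = ∫ ĥ(u)e^{iru}du. -/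
open Real MeasureTheory

private lemma integral_deriv_cs (g : ℝ → ℝ) (hg : ContDiff ℝ 1 g)
    (hc : HasCompactSupport g) : ∫ u : ℝ, deriv g u = 0 := by
  have h1 := hc.integral_Iic_deriv_eq hg 0
  have h2 := hc.integral_Ioi_deriv_eq hg 0
  have h3 : IntegrableOn (deriv g) (Set.Iic 0) :=
    ((hg.continuous_deriv le_rfl).integrable_of_hasCompactSupport hc.deriv).integrableOn
  have h4 : IntegrableOn (deriv g) (Set.Ioi 0) :=
    ((hg.continuous_deriv le_rfl).integrable_of_hasCompactSupport hc.deriv).integrableOn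
  have := intervalIntegral.integral_Iic_add_Ioi h3 h4
  rw [h1, h2] at this
  linarith [this]

private lemma ibp_exp (f : ℝ → ℝ) (hf : ContDiff ℝ (⊤ : ℕ∞) f) (hc : HasCompactSupport f) (c : ℝ) :
    ∫ u : ℝ, deriv f u * Real.exp (c * u) = -c * ∫ u : ℝ, f u * Real.exp (c * u) := by
  set g : ℝ → ℝ := fun u => f u * Real.exp (c * u) with hgdef
  have hde : ∀ u : ℝ, HasDerivAt g (deriv f u * Real.exp (c * u) + f u * (c * Real.exp (c * u))) u := by
    intro u
    have h1 : HasDerivAt f (deriv f u) u := (hf.differentiable (by simp) u).hasDerivAt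
    have h2 : HasDerivAt (fun u => Real.exp (c * u)) (c * Real.exp (c * u)) u := by
      have := (Real.hasDerivAt_exp (c * u)).comp u ((hasDerivAt_id u).const_mul c)
      exact this.congr_deriv (by ring)
    exact h1.mul h2
  have hgc : ContDiff ℝ 1 g :=
    (hf.of_le (by simp)).mul ((Real.contDiff_exp.comp (contDiff_const.mul contDiff_id)).of_le le_top)
  have hgs : HasCompactSupport g := hc.mul_right
  have hdg : deriv g = fun u => deriv f u * Real.exp (c * u) + f u * (c * Real.exp (c * u)) :=
    funext fun u => (hde u).deriv
  have hz : ∫ u : ℝ, (deriv f u * Real.exp (c * u) + f u * (c * Real.exp (c * u))) = 0 := by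
    rw [← hdg]; exact integral_deriv_cs g hgc hgs
  have hi1 : Integrable (fun u : ℝ => deriv f u * Real.exp (c * u)) := by
    apply Continuous.integrable_of_hasCompactSupport
    · exact (hf.continuous_deriv (by simp)).mul (Real.continuous_exp.comp (continuous_const.mul continuous_id))
    · exact hc.deriv.mul_right
  have hi2 : Integrable (fun u : ℝ => f u * (c * Real.exp (c * u))) := by
    apply Continuous.integrable_of_hasCompactSupport
    · exact hf.continuous.mul (continuous_const.mul (Real.continuous_exp.comp (continuous_const.mul continuous_id)))
    · exact hc.mul_right
  rw [integral_add hi1 hi2] at hz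
  have : ∫ u : ℝ, f u * (c * Real.exp (c * u)) = c * ∫ u : ℝ, f u * Real.exp (c * u) := by
    rw [← integral_const_mul]; congr 1; funext u; ring
  rw [this] at hz
  linarith [hz]

/-- For a smooth even compactly supported `ĥ`, with `h(r) = ∫ ĥ(u)e^{iru}du` so that
`h(i(|m|-1/2)) = ∫ ĥ(u)e^{(|m|-1/2)u}du`, one has
`(-1/2π)∫ ĥ'(u)/(2 sinh(u/2)) e^{-mu}(1 - e^{σu}) du = ((2|m|-1)/4π) h(i(|m|-1/2))`
for every nonzero integer `m`, where `σ = sgn(m)`. -/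
theorem stmt16 (hhat : ℝ → ℝ) (hsmooth : ContDiff ℝ (⊤ : ℕ∞) hhat)
    (heven : ∀ u, hhat (-u) = hhat u) (hsupp : HasCompactSupport hhat)
    (m : ℤ) (hm : m ≠ 0) :
    (-1 / (2 * π)) * ∫ u : ℝ, deriv hhat u / (2 * Real.sinh (u / 2))
        * (Real.exp (-(m : ℝ) * u) * (1 - Real.exp ((m.sign : ℝ) * u)))
    = ((2 * |(m : ℝ)| - 1) / (4 * π))
        * ∫ u : ℝ, hhat u * Real.exp ((|(m : ℝ)| - 1 / 2) * u) := by
  set s : ℝ := (m.sign : ℝ) with hs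
  have hscases : s = 1 ∨ s = -1 := by
    rcases Int.lt_or_lt_of_ne hm with h | h
    · right; simp [hs, Int.sign_eq_neg_one_iff_neg.mpr h]
    · left; simp [hs, Int.sign_eq_one_iff_pos.mpr h]
  -- pointwise equality off u = 0
  have hpt : ∀ u : ℝ, u ≠ 0 →
      deriv hhat u / (2 * Real.sinh (u / 2))
        * (Real.exp (-(m : ℝ) * u) * (1 - Real.exp (s * u)))
      = -s * (deriv hhat u * Real.exp ((-( (m:ℝ) - s/2)) * u)) := by
    intro u hu
    have hsne : 2 * Real.sinh (u / 2) ≠ 0 := by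
      simp only [mul_ne_zero_iff]
      refine ⟨two_ne_zero, ?_⟩
      rw [Real.sinh_ne_zero]
      exact div_ne_zero hu two_ne_zero
    rw [div_mul_eq_mul_div, div_eq_iff hsne, Real.sinh_eq]
    have key : Real.exp (-(m : ℝ) * u) * (1 - Real.exp (s * u))
        = -s * Real.exp ((-( (m:ℝ) - s/2)) * u) * (2 * ((Real.exp (u/2) - Real.exp (-(u/2))) / 2)) := by
      rcases hscases with h1 | h1 <;> rw [h1]
      · have e1 : Real.exp ((-( (m:ℝ) - 1/2)) * u) * Real.exp (u/2) = Real.exp (-(m:ℝ) * u) * Real.exp ((1:ℝ) * u) := by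
          rw [← Real.exp_add, ← Real.exp_add]; congr 1; ring
        have e2 : Real.exp ((-( (m:ℝ) - 1/2)) * u) * Real.exp (-(u/2)) = Real.exp (-(m:ℝ) * u) := by
          rw [← Real.exp_add]; congr 1; ring
        linear_combination e1 - e2
      · have e1 : Real.exp ((-( (m:ℝ) - (-1:ℝ)/2)) * u) * Real.exp (u/2) = Real.exp (-(m:ℝ) * u) := by
          rw [← Real.exp_add]; congr 1; ring
        have e2 : Real.exp ((-( (m:ℝ) - (-1:ℝ)/2)) * u) * Real.exp (-(u/2)) = Real.exp (-(m:ℝ) * u) * Real.exp ((-1:ℝ) * u) := by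
          rw [← Real.exp_add, ← Real.exp_add]; congr 1; ring
        linear_combination (-1 : ℝ) * e1 + e2
    calc deriv hhat u * (Real.exp (-(m : ℝ) * u) * (1 - Real.exp (s * u)))
        = deriv hhat u * (-s * Real.exp ((-( (m:ℝ) - s/2)) * u) * (2 * ((Real.exp (u/2) - Real.exp (-(u/2))) / 2))) := by rw [key]
      _ = -s * (deriv hhat u * Real.exp ((-( (m:ℝ) - s/2)) * u)) * (2 * ((Real.exp (u/2) - Real.exp (-(u/2))) / 2)) := by ring
  -- integral congruence a.e.
  have hae : (fun u : ℝ => deriv hhat u / (2 * Real.sinh (u / 2))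
        * (Real.exp (-(m : ℝ) * u) * (1 - Real.exp (s * u))))
      =ᵐ[volume] fun u => -s * (deriv hhat u * Real.exp ((-( (m:ℝ) - s/2)) * u)) := by
    filter_upwards [compl_mem_ae_iff.mpr (volume_singleton (a := (0:ℝ)))] with u hu
    exact hpt u hu
  rw [integral_congr_ae hae, integral_const_mul,
    ibp_exp hhat hsmooth hsupp (-( (m:ℝ) - s/2))]
  -- now handle sign cases
  have hπ : (π : ℝ) ≠ 0 := Real.pi_ne_zero
  rcases hscases with h1 | h1
  · -- m > 0 : |m| = m, λ := m - 1/2 > 0, need evenness flip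
    have hmpos : (0:ℤ) < m := by
      rcases Int.lt_or_lt_of_ne hm with h | h
      · exfalso; rw [hs] at h1; rw [Int.sign_eq_neg_one_iff_neg.mpr h] at h1; norm_num at h1
      · exact h
    have habs : |(m : ℝ)| = (m : ℝ) := abs_of_pos (by exact_mod_cast hmpos)
    have hflip : ∫ u : ℝ, hhat u * Real.exp ((-( (m:ℝ) - s/2)) * u)
        = ∫ u : ℝ, hhat u * Real.exp ((|(m : ℝ)| - 1/2) * u) := by
      rw [← integral_neg_eq_self (fun u => hhat u * Real.exp ((|(m : ℝ)| - 1/2) * u)) volume]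
      congr 1; funext u
      rw [heven u, habs, h1]
      congr 1
      rw [show (((m:ℝ) - 1/2) * -u) = (-((m:ℝ) - 1/2)) * u by ring]
    rw [hflip, h1, habs]
    field_simp
    ring
  · -- m < 0 : |m| = -m, λ = -(|m|-1/2), no flip needed
    have hmneg : m < 0 := by
      rcases Int.lt_or_lt_of_ne hm with h | h
      · exact h
      · exfalso; rw [hs] at h1; rw [Int.sign_eq_one_iff_pos.mpr h] at h1; norm_num at h1
    have habs : |(m : ℝ)| = -(m : ℝ) := abs_of_neg (by exact_mod_cast hmneg)
    have harg : (-( (m:ℝ) - s/2)) = |(m : ℝ)| - 1/2 := by rw [habs, h1]; ring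
    rw [harg, habs, h1]
    field_simp
    ring
end
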